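/- Let M be a module over a Lie algebra L and A a commutative unital algebra acting on M such that y(fv) = (yf)v + f(yv) for y ∈ L, f ∈ A, v ∈ M, for some action of L on A by derivations. Define, for a ∈ L and w ∈ M, the map φ(a,w) : A → M by φ(a,w)(f) = (fa)w (where fa denotes an A-module structure on L). Then the coinduced action (b·ψ)(f) = b(ψ(f)) − ψ(bf) and (y·ψ)(f) = ψ(yf) on Hom(A, M) makes Hom(A,M) an L-module and an A-module with compatible structures, and the span of all φ(a,w) is an (L,A)-submodule, with b·φ(a,w) = φ([b,a],w) + φ(a, b·w) and f·φ(a,w) = φ(fa, w). -/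
import Mathlib


section

variable {L A M : Type*}
variable [LieRing L] [LieAlgebra ℂ L] [CommRing A] [Algebra ℂ A]
variable [AddCommGroup M] [Module ℂ M]

/-- The coinduced action of `b ∈ L` on `ψ ∈ Hom(A, M)`:
`(b·ψ)(f) = b(ψ(f)) − ψ(b·f)`, where `ρ` is the `L`-action on `M` and `d` is the
action of `L` on `A` by derivations. -/
noncomputable def coindL (ρ : L →ₗ[ℂ] Module.End ℂ M) (d : L →ₗ[ℂ] Module.End ℂ A)
    (b : L) (ψ : A →ₗ[ℂ] M) : A →ₗ[ℂ] M :=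
  ρ b ∘ₗ ψ - ψ ∘ₗ d b

/-- The coinduced action of `g ∈ A` on `ψ ∈ Hom(A, M)`: `(g·ψ)(f) = ψ(g f)`. -/
noncomputable def coindA (g : A) (ψ : A →ₗ[ℂ] M) : A →ₗ[ℂ] M :=
  ψ ∘ₗ LinearMap.mulLeft ℂ g

/-- The map `φ(a, w) : A → M`, `φ(a, w)(f) = (f·a)·w`, where `sm` is the `A`-module
structure on `L` and `ρ` the `L`-action on `M`. -/
noncomputable def phiMap (ρ : L →ₗ[ℂ] Module.End ℂ M) (sm : A →ₗ[ℂ] L →ₗ[ℂ] L)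
    (a : L) (w : M) : A →ₗ[ℂ] M where
  toFun f := ρ (sm f a) w
  map_add' f g := by simp
  map_smul' c f := by simp

/-- the coinduced actions on `Hom(A, M)` make it an `L`-module and an
`A`-module with compatible structures, and on the maps `φ(a,w)` (whose span is the
`A`-cover) one has `b·φ(a,w) = φ([b,a],w) + φ(a,b·w)` and `f·φ(a,w) = φ(f·a,w)`.
Hypotheses: `ρ` is an `L`-action on `M`, `σ` an `A`-action on `M`, `d` an action of
`L` on `A` by derivations respecting brackets, with compatibility
`y(fv) = (yf)v + f(yv)`, and `sm` is an `A`-module structure on `L` compatible with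
`ρ`, `σ` and the brackets (Leibniz rule). -/
theorem stmt15 (ρ : L →ₗ[ℂ] Module.End ℂ M)
    (hρ : ∀ a b : L, ρ ⁅a, b⁆ = ⁅ρ a, ρ b⁆)
    (σ : A →ₐ[ℂ] Module.End ℂ M)
    (d : L →ₗ[ℂ] Module.End ℂ A)
    (hd : ∀ a b : L, d ⁅a, b⁆ = ⁅d a, d b⁆)
    (hder : ∀ (y : L) (f g : A), d y (f * g) = d y f * g + f * d y g)
    (hcomp : ∀ (y : L) (f : A) (v : M), ρ y (σ f v) = σ (d y f) v + σ f (ρ y v))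
    (sm : A →ₗ[ℂ] L →ₗ[ℂ] L)
    (hsm1 : ∀ a : L, sm 1 a = a)
    (hsmmul : ∀ (f g : A) (a : L), sm (f * g) a = sm f (sm g a))
    (hsmρ : ∀ (f : A) (a : L) (v : M), ρ (sm f a) v = σ f (ρ a v))
    (hsmbr : ∀ (b : L) (f : A) (a : L), ⁅b, sm f a⁆ = sm f ⁅b, a⁆ + sm (d b f) a) :
    -- `Hom(A,M)` is an `L`-module:
    (∀ (b₁ b₂ : L) (ψ : A →ₗ[ℂ] M),
      coindL ρ d ⁅b₁, b₂⁆ ψ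
        = coindL ρ d b₁ (coindL ρ d b₂ ψ) - coindL ρ d b₂ (coindL ρ d b₁ ψ)) ∧
    -- `Hom(A,M)` is a unital `A`-module:
    (∀ (g₁ g₂ : A) (ψ : A →ₗ[ℂ] M),
      coindA (g₁ * g₂) ψ = coindA g₁ (coindA g₂ ψ) ∧ coindA (1 : A) ψ = ψ) ∧
    -- the two structures are compatible:
    (∀ (b : L) (g : A) (ψ : A →ₗ[ℂ] M),
      coindL ρ d b (coindA g ψ) = coindA (d b g) ψ + coindA g (coindL ρ d b ψ)) ∧
    -- the span of the `φ(a,w)` is a submodule for both actions: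
    (∀ (b a : L) (w : M),
      coindL ρ d b (phiMap ρ sm a w) = phiMap ρ sm ⁅b, a⁆ w + phiMap ρ sm a (ρ b w)) ∧
    (∀ (g : A) (a : L) (w : M),
      coindA g (phiMap ρ sm a w) = phiMap ρ sm (sm g a) w) := by
  refine ⟨?_, ?_, ?_, ?_, ?_⟩
  · intro b₁ b₂ ψ
    ext f
    simp only [coindL, hρ, hd, LinearMap.sub_apply, LinearMap.comp_apply,
      LieHom.lie_apply, Module.End.lie_apply, LinearMap.sub_apply]
    simp [Ring.lie_def, LinearMap.sub_apply, map_sub]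
    abel
  · intro g₁ g₂ ψ
    constructor <;> ext f <;> simp [coindA, mul_assoc, mul_left_comm]
  · intro b g ψ
    ext f
    simp [coindL, coindA, hder, map_add]
    abel
  · intro b a w
    ext f
    have h1 : ρ ⁅b, sm f a⁆ w = ρ b (ρ (sm f a) w) - ρ (sm f a) (ρ b w) := by
      rw [hρ]; simp [Ring.lie_def]
    have h2 : ρ ⁅b, sm f a⁆ w = ρ (sm f ⁅b, a⁆) w + ρ (sm (d b f) a) w := by
      rw [hsmbr]; simp
    simp only [coindL, phiMap, LinearMap.sub_apply, LinearMap.comp_apply,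
      LinearMap.add_apply, LinearMap.coe_mk, AddHom.coe_mk]
    have := h1.symm.trans h2
    linear_combination (norm := module) this
  · intro g a w
    ext f
    simp only [coindA, phiMap, LinearMap.comp_apply, LinearMap.mulLeft_apply,
      LinearMap.coe_mk, AddHom.coe_mk]
    rw [← hsmmul, mul_comm]

end
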